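/- Let $B\subset\mathbb{R}^2$ be an open ball of radius $R$ and let $N:B\to\mathcal{S}^1$ be a continuous unit vector field such that for all $x,y\in B$: if the lines $[x;N(x)]$ and $[y;N(y)]$ intersect within the ball $2B$ of twice the radius (same center), then $[x;N(x)]=[y;N(y)]$. Then $N$ is Lipschitz continuous with $\mathrm{Lip}(N)\le 1/R$. -/

import Mathlib

/-!
If the lines through `x` and `y` are not parallel, they meet at a point `p` outside `2B`, hence at
distance more than `R` from both `x` and `y`. Writing `x - y = s • N x + t • N y` with
`|s|, |t| ≥ R`, the law of cosines gives `R * min ‖N x ∓ N y‖ ≤ ‖x - y‖`. The sign ambiguity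
(the lines only determine `N` up to sign) is removed locally by continuity, and a continuous
induction along the segment from `x` to `y` turns the local Lipschitz bound into a global one.
-/

open Metric Filter Topology Set Module

theorem exists_smul_eq_of_setOf_line_eq {R V : Type*} [Ring R] [AddCommGroup V] [Module R V]
    {x y u v : V} (h : {p | ∃ s : R, p = x + s • u} = {p | ∃ s : R, p = y + s • v}) :
    ∃ c : R, c • u = v := by
  have hy : y ∈ {p | ∃ s : R, p = y + s • v} := ⟨0, by simp⟩
  have hyv : y + v ∈ {p | ∃ s : R, p = y + s • v} := ⟨1, by simp⟩
  rw [← h] at hy hyv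
  obtain ⟨s₀, hs₀⟩ := hy
  obtain ⟨s₁, hs₁⟩ := hyv
  refine ⟨s₁ - s₀, ?_⟩
  rw [sub_smul, eq_sub_of_add_eq' hs₁.symm, hs₀]
  abel

theorem exists_smul_add_smul_eq_of_finrank_eq_two {K V : Type*} [DivisionRing K] [AddCommGroup V]
    [Module K V] (h2 : finrank K V = 2) {u v : V} (hli : LinearIndependent K ![u, v]) (w : V) :
    ∃ s t : K, s • u + t • v = w := by
  have hspan := hli.span_eq_top_of_card_eq_finrank (by simp [h2])
  rw [Matrix.range_cons_cons_empty] at hspan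
  exact Submodule.mem_span_pair.mp (hspan ▸ Submodule.mem_top)

theorem eq_or_eq_neg_of_smul_eq {E : Type*} [SeminormedAddCommGroup E] [NormedSpace ℝ E]
    {u v : E} (hu : ‖u‖ = 1) (hv : ‖v‖ = 1) {c : ℝ} (hc : c • u = v) : v = u ∨ v = -u := by
  have : |c| = 1 := by simpa [← hc, norm_smul, hu] using hv
  rcases abs_eq_abs.mp (this.trans abs_one.symm) with rfl | rfl <;> simp [← hc]

theorem mul_norm_sub_le_or_mul_norm_add_le {E : Type*} [NormedAddCommGroup E]
    [InnerProductSpace ℝ E] {u v : E} (hu : ‖u‖ = 1) (hv : ‖v‖ = 1)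
    {r s t : ℝ} (hr : 0 ≤ r) (hs : r ≤ |s|) (ht : r ≤ |t|) :
    r * ‖u - v‖ ≤ ‖s • u + t • v‖ ∨ r * ‖u + v‖ ≤ ‖s • u + t • v‖ := by
  set c := inner ℝ u v
  have hc : |c| ≤ 1 := by simpa [hu, hv] using abs_real_inner_le_norm u v
  have hst : ‖s • u + t • v‖ ^ 2 = s ^ 2 + t ^ 2 + 2 * (s * t) * c := by
    rw [norm_add_sq_real, norm_smul, norm_smul, real_inner_smul_left, real_inner_smul_right,
      hu, hv, Real.norm_eq_abs, Real.norm_eq_abs, mul_one, mul_one, sq_abs, sq_abs]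
    ring
  have hsub : ‖u - v‖ ^ 2 = 2 - 2 * c := by rw [norm_sub_sq_real, hu, hv]; ring
  have hadd : ‖u + v‖ ^ 2 = 2 + 2 * c := by rw [norm_add_sq_real, hu, hv]; ring
  -- `s² + t² + 2stc ≥ 2|s||t|(1 - |c|) ≥ r²(2 - 2|c|)`
  have hkey : r ^ 2 * (2 - 2 * |c|) ≤ ‖s • u + t • v‖ ^ 2 := by
    have hprod : -(|s| * |t| * |c|) ≤ s * t * c := by
      simpa only [abs_mul] using neg_abs_le (s * t * c)
    have hrr : r ^ 2 ≤ |s| * |t| := by nlinarith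
    rw [hst]
    nlinarith [sq_abs s, sq_abs t, sq_nonneg (|s| - |t|), mul_le_mul_of_nonneg_right hrr
      (by linarith : 0 ≤ 1 - |c|)]
  rcases le_total 0 c with hc0 | hc0
  · left
    rw [← sq_le_sq₀ (by positivity) (norm_nonneg _), mul_pow, hsub]
    rwa [abs_of_nonneg hc0] at hkey
  · right
    rw [← sq_le_sq₀ (by positivity) (norm_nonneg _), mul_pow, hadd]
    rw [abs_of_nonpos hc0] at hkey
    linarith

theorem norm_sub_le_or_norm_add_le_of_line_eq_of_meet {E : Type*} [NormedAddCommGroup E]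
    [InnerProductSpace ℝ E] (h2 : finrank ℝ E = 2) {O x y u v : E} {R : ℝ}
    (hx : x ∈ ball O R) (hy : y ∈ ball O R) (hu : ‖u‖ = 1) (hv : ‖v‖ = 1)
    (hline : (∃ p ∈ ball O (2 * R), (∃ s : ℝ, p = x + s • u) ∧ (∃ s : ℝ, p = y + s • v)) →
      {p | ∃ s : ℝ, p = x + s • u} = {p | ∃ s : ℝ, p = y + s • v}) :
    ‖u - v‖ ≤ 1 / R * ‖x - y‖ ∨ ‖u + v‖ ≤ 1 / R * ‖x - y‖ := by
  have hR : 0 < R := pos_of_mem_ball hx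
  rw [one_div_mul_eq_div, le_div_iff₀' hR, le_div_iff₀' hR]
  by_cases hpar : ∃ c : ℝ, c • u = v
  · obtain ⟨c, hc⟩ := hpar
    rcases eq_or_eq_neg_of_smul_eq hu hv hc with rfl | rfl <;> simp
  simp only [not_exists] at hpar
  have hli := (LinearIndependent.pair_iff' (norm_ne_zero_iff.mp (hu ▸ one_ne_zero))).mpr hpar
  obtain ⟨s, t, hst⟩ := exists_smul_add_smul_eq_of_finrank_eq_two h2 hli (x - y)
  set p := y + t • v
  have hpx : p = x + (-s) • u := by simp only [p]; linear_combination (norm := module) hst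
  have hfar : 2 * R ≤ dist p O := by
    by_contra! hnear
    obtain ⟨c, hc⟩ := exists_smul_eq_of_setOf_line_eq
      (hline ⟨p, mem_ball.mpr hnear, ⟨-s, hpx⟩, ⟨t, rfl⟩⟩)
    exact hpar c hc
  have hs : R ≤ |s| := by
    have : dist p x = |s| := by simp [dist_eq_norm, hpx, norm_smul, hu]
    linarith [dist_triangle p x O, mem_ball.mp hx]
  have ht : R ≤ |t| := by
    have : dist p y = |t| := by simp [dist_eq_norm, p, norm_smul, hv]
    linarith [dist_triangle p y O, mem_ball.mp hy]
  rw [← hst]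
  exact mul_norm_sub_le_or_mul_norm_add_le hu hv hR.le hs ht

theorem one_lt_norm_add_of_norm_sub_lt_one {E : Type*} [SeminormedAddCommGroup E]
    [NormedSpace ℝ E] {u v : E} (hu : ‖u‖ = 1) (h : ‖u - v‖ < 1) : 1 < ‖u + v‖ := by
  have h2 : ‖(2 : ℝ) • u‖ = 2 := by simp [norm_smul, hu]
  have := norm_add_le (u + v) (u - v)
  rw [show u + v + (u - v) = (2 : ℝ) • u by module, h2] at this
  linarith

theorem eventually_norm_sub_le_of_norm_sub_le_or_norm_add_le {E F : Type*}
    [SeminormedAddCommGroup E] [SeminormedAddCommGroup F] [NormedSpace ℝ F] {s : Set E}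
    {f : E → F} {x : E} (hf : ContinuousWithinAt f s x) (hx : ‖f x‖ = 1) {K : ℝ}
    (h : ∀ y ∈ s, ‖f x - f y‖ ≤ K * ‖x - y‖ ∨ ‖f x + f y‖ ≤ K * ‖x - y‖) :
    ∀ᶠ y in 𝓝[s] x, ‖f x - f y‖ ≤ K * ‖x - y‖ := by
  have hclose : ∀ᶠ y in 𝓝[s] x, ‖f x - f y‖ < 1 := by
    filter_upwards [hf (ball_mem_nhds (f x) one_pos)] with y hy
    rwa [mem_preimage, mem_ball, dist_eq_norm'] at hy
  have hsmall : ∀ᶠ y in 𝓝[s] x, K * ‖x - y‖ < 1 := by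
    refine eventually_nhdsWithin_of_eventually_nhds (ContinuousAt.eventually_lt ?_ ?_ ?_) <;>
      first | fun_prop | simp
  filter_upwards [hclose, hsmall, self_mem_nhdsWithin] with y hclose hsmall hy
  refine (h y hy).resolve_right fun hadd ↦ ?_
  linarith [one_lt_norm_add_of_norm_sub_lt_one hx hclose]

theorem Convex.norm_sub_le_of_eventually_norm_sub_le {E F : Type*} [SeminormedAddCommGroup E]
    [NormedSpace ℝ E] [SeminormedAddCommGroup F] {s : Set E} (hs : Convex ℝ s) {f : E → F}
    (hf : ContinuousOn f s) {K : ℝ}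
    (hloc : ∀ x ∈ s, ∀ᶠ y in 𝓝[s] x, ‖f x - f y‖ ≤ K * ‖x - y‖) {x y : E}
    (hx : x ∈ s) (hy : y ∈ s) : ‖f x - f y‖ ≤ K * ‖x - y‖ := by
  set γ : ℝ → E := fun t ↦ x + t • (y - x)
  have hγ : Continuous γ := by fun_prop
  have hγs : MapsTo γ (Icc 0 1) s := fun t ht ↦ hs.add_smul_sub_mem hx hy ht
  have hγdist : ∀ t z : ℝ, ‖γ t - γ z‖ = |t - z| * ‖y - x‖ := fun t z ↦ by
    rw [show γ t - γ z = (t - z) • (y - x) by simp only [γ]; module, norm_smul, Real.norm_eq_abs]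
  -- continuous induction on `t ∈ [0, 1]` for the bound `‖f (γ t) - f x‖ ≤ K t ‖y - x‖`
  set S := {t : ℝ | ‖f (γ t) - f x‖ ≤ K * (t * ‖y - x‖)}
  have hclosed : IsClosed (S ∩ Icc 0 1) := by
    rw [inter_comm]
    have : ContinuousOn (fun t ↦ ‖f (γ t) - f x‖ - K * (t * ‖y - x‖)) (Icc 0 1) :=
      ((hf.comp hγ.continuousOn hγs).sub continuousOn_const).norm.sub (by fun_prop)
    convert this.preimage_isClosed_of_isClosed isClosed_Icc (isClosed_Iic (a := 0)) using 2
    ext t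
    simp [S]
  have hstep : ∀ t ∈ S ∩ Ico 0 1, S ∈ 𝓝[>] t := by
    rintro t ⟨htS, ht₀, ht₁⟩
    have hγt : Tendsto γ (𝓝[>] t) (𝓝[s] (γ t)) := by
      refine tendsto_nhdsWithin_iff.mpr ⟨hγ.continuousAt.tendsto.mono_left nhdsWithin_le_nhds, ?_⟩
      filter_upwards [Ioo_mem_nhdsGT ht₁] with z hz
      exact hγs ⟨ht₀.trans hz.1.le, hz.2.le⟩
    filter_upwards [hγt.eventually (hloc (γ t) (hγs ⟨ht₀, ht₁.le⟩)), self_mem_nhdsWithin]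
      with z hz htz
    rw [hγdist, abs_sub_comm, abs_of_pos (sub_pos.mpr htz)] at hz
    calc ‖f (γ z) - f x‖ ≤ ‖f (γ z) - f (γ t)‖ + ‖f (γ t) - f x‖ :=
          norm_sub_le_norm_sub_add_norm_sub ..
      _ ≤ K * ((z - t) * ‖y - x‖) + K * (t * ‖y - x‖) :=
          add_le_add (by rw [norm_sub_rev]; linarith) htS
      _ = K * (z * ‖y - x‖) := by ring
  have hIcc := hclosed.Icc_subset_of_forall_mem_nhdsWithin (by simp [S, γ]) hstep
    (right_mem_Icc.mpr zero_le_one)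
  simpa [S, γ, norm_sub_rev] using hIcc

theorem stmt7_general (O : EuclideanSpace ℝ (Fin 2)) (R : ℝ)
    (N : EuclideanSpace ℝ (Fin 2) → EuclideanSpace ℝ (Fin 2))
    (hcont : ContinuousOn N (ball O R))
    (hunit : ∀ x ∈ ball O R, ‖N x‖ = 1)
    (hline : ∀ x ∈ ball O R, ∀ y ∈ ball O R,
      (∃ p ∈ ball O (2 * R), (∃ s : ℝ, p = x + s • N x) ∧ (∃ s : ℝ, p = y + s • N y)) →
      { p | ∃ s : ℝ, p = x + s • N x } = { p | ∃ s : ℝ, p = y + s • N y }) :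
    ∀ x ∈ ball O R, ∀ y ∈ ball O R, ‖N x - N y‖ ≤ (1 / R) * ‖x - y‖ := by
  have hsign : ∀ x ∈ ball O R, ∀ y ∈ ball O R,
      ‖N x - N y‖ ≤ 1 / R * ‖x - y‖ ∨ ‖N x + N y‖ ≤ 1 / R * ‖x - y‖ := fun x hx y hy ↦
    norm_sub_le_or_norm_add_le_of_line_eq_of_meet finrank_euclideanSpace_fin hx hy
      (hunit x hx) (hunit y hy) (hline x hx y hy)
  intro x hx y hy
  refine (convex_ball O R).norm_sub_le_of_eventually_norm_sub_le hcont (fun z hz ↦ ?_) hx hy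
  exact eventually_norm_sub_le_of_norm_sub_le_or_norm_add_le (hcont z hz) (hunit z hz)
    (hsign z hz)

/-- If a continuous unit vector field `N` on an open ball `B = B(O,R)` in the plane
has the property that any two of its lines `[x;N(x)]` that meet inside the
concentric ball of radius `2R` coincide, then `N` is Lipschitz with constant `1/R`. -/
theorem stmt7 (O : EuclideanSpace ℝ (Fin 2)) (R : ℝ) (hR : 0 < R)
    (N : EuclideanSpace ℝ (Fin 2) → EuclideanSpace ℝ (Fin 2))
    (hcont : ContinuousOn N (ball O R))
    (hunit : ∀ x ∈ ball O R, ‖N x‖ = 1)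
    (hline : ∀ x ∈ ball O R, ∀ y ∈ ball O R,
      (∃ p ∈ ball O (2 * R), (∃ s : ℝ, p = x + s • N x) ∧ (∃ s : ℝ, p = y + s • N y)) →
      { p | ∃ s : ℝ, p = x + s • N x } = { p | ∃ s : ℝ, p = y + s • N y }) :
    ∀ x ∈ ball O R, ∀ y ∈ ball O R, ‖N x - N y‖ ≤ (1 / R) * ‖x - y‖ :=
  stmt7_general O R N hcont hunit hline
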